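/- arXiv:1605.03217 — 2 statements merged into one kernel-verified Lean document; each statement's English description precedes it below -/
import Mathlib

section
/- With the assumptions of the preceding construction, the shift operator A_0 defined on equivalence classes by A_0 [ (h_0, h_1, …, h_r, 0, …) ] = [ (0, h_0, h_1, …, h_r, 0, …) ] is well-defined on the quotient of B by the null space of Φ. -/
open scoped ComplexOrder

/-- The Hankel sesquilinear form `Φ((h_j),(g_k)) = ∑_{j,k} ⟨S_{j+k} h_j, g_k⟩` on finitely
supported `H`-valued sequences. -/
noncomputable def hankelForm {H : Type*} [NormedAddCommGroup H] [InnerProductSpace ℂ H]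
    (S : ℕ → H →L[ℂ] H) (u v : ℕ →₀ H) : ℂ :=
  ∑ j ∈ u.support, ∑ k ∈ v.support, (inner ℂ (u j) (S (j + k) (v k)) : ℂ)

/-- The right shift `(h_0, h_1, …) ↦ (0, h_0, h_1, …)` on finitely supported sequences. -/
noncomputable def rightShift {H : Type*} [AddCommGroup H] (u : ℕ →₀ H) : ℕ →₀ H :=
  Finsupp.mapDomain (· + 1) u

/-!
The Hankel form `Φ` is a positive semidefinite sesquilinear form on finitely supported sequences,
so by the Cauchy–Schwarz argument (expanding `0 ≤ Φ(w + t y, w + t y)`) a null vector `w` satisfies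
`Φ(w, y) = 0` for every `y`. Since `Φ(S w, y) = Φ(w, S y)` (both sides only see `S_{j+k+1}`),
`Φ(S w, S w) = Φ(w, S² w) = 0`.
-/

theorem Complex.eq_zero_of_forall_real_nonneg_mul_add_sq {a c : ℂ} (hc : 0 ≤ c)
    (h : ∀ r : ℝ, 0 ≤ r * a + r ^ 2 * c) : a = 0 := by
  have him : a.im = 0 := by
    have h1 := (Complex.nonneg_iff.mp (h 1)).2
    simp only [Complex.ofReal_one, one_mul, one_pow, Complex.add_im] at h1
    linarith [(Complex.nonneg_iff.mp hc).2]
  have hre : a.re = 0 := by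
    have hdisc : discrim c.re a.re 0 ≤ 0 := discrim_le_zero fun r => by
      have := (Complex.nonneg_iff.mp (h r)).1
      simp only [Complex.add_re, Complex.re_ofReal_mul, ← Complex.ofReal_pow] at this
      linarith
    rw [discrim] at hdisc
    nlinarith [sq_nonneg a.re]
  exact Complex.ext hre him

namespace LinearMap

variable {M : Type*} [AddCommGroup M] [Module ℂ M]

theorem apply_add_smul_self (B : M →ₗ⋆[ℂ] M →ₗ[ℂ] ℂ) (x y : M) (t : ℂ) :
    B (x + t • y) (x + t • y) =
      B x x + t * B x y + starRingEnd ℂ t * B y x + starRingEnd ℂ t * t * B y y := by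
  simp only [map_add, map_smulₛₗ, add_apply, smul_apply, smul_eq_mul, RingHom.id_apply]
  ring

theorem apply_eq_zero_of_apply_self_eq_zero (B : M →ₗ⋆[ℂ] M →ₗ[ℂ] ℂ)
    (hB : ∀ z, 0 ≤ B z z) {x : M} (hx : B x x = 0) (y : M) : B x y = 0 := by
  have hquad (t : ℂ) :
      0 ≤ t * B x y + starRingEnd ℂ t * B y x + starRingEnd ℂ t * t * B y y := by
    simpa only [apply_add_smul_self, hx, zero_add] using hB (x + t • y)
  -- `B` need not be Hermitian: real and imaginary `t` isolate `B x y + B y x` and `B x y - B y x`.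
  have hsum : B x y + B y x = 0 :=
    Complex.eq_zero_of_forall_real_nonneg_mul_add_sq (hB y) fun r => by
      convert hquad r using 1
      simp only [Complex.conj_ofReal]
      ring
  have hdiff : Complex.I * (B x y - B y x) = 0 :=
    Complex.eq_zero_of_forall_real_nonneg_mul_add_sq (hB y) fun r => by
      convert hquad (r * Complex.I) using 1
      simp only [map_mul, Complex.conj_ofReal, Complex.conj_I]
      linear_combination ((r : ℂ) ^ 2 * B y y) * Complex.I_sq
  have hdiff' : B x y - B y x = 0 := (mul_eq_zero.mp hdiff).resolve_left Complex.I_ne_zero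
  linear_combination (hsum + hdiff') / 2

end LinearMap

section Hankel

variable {H : Type*} [NormedAddCommGroup H] [InnerProductSpace ℂ H] (S : ℕ → H →L[ℂ] H)

theorem hankelForm_eq_sum (u v : ℕ →₀ H) :
    hankelForm S u v = u.sum fun j a => v.sum fun k b => inner ℂ a (S (j + k) b) :=
  rfl

theorem hankelForm_eq_sum_range {u v : ℕ →₀ H} {n : ℕ} (hu : u.support ⊆ Finset.range n)
    (hv : v.support ⊆ Finset.range n) :
    hankelForm S u v =
      ∑ j ∈ Finset.range n, ∑ k ∈ Finset.range n, inner ℂ (u j) (S (j + k) (v k)) := by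
  rw [hankelForm_eq_sum, Finsupp.sum_of_support_subset u hu _ fun _ _ => by simp]
  refine Finset.sum_congr rfl fun j _ => ?_
  exact Finsupp.sum_of_support_subset v hv _ fun _ _ => by simp

theorem hankelForm_add_left (u₁ u₂ v : ℕ →₀ H) :
    hankelForm S (u₁ + u₂) v = hankelForm S u₁ v + hankelForm S u₂ v := by
  simp only [hankelForm_eq_sum]
  exact Finsupp.sum_add_index' (fun _ => by simp) fun _ _ _ => by
    simp only [inner_add_left, Finsupp.sum_add]

theorem hankelForm_smul_left (c : ℂ) (u v : ℕ →₀ H) :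
    hankelForm S (c • u) v = starRingEnd ℂ c * hankelForm S u v := by
  simp only [hankelForm_eq_sum]
  rw [Finsupp.sum_smul_index' fun _ => by simp]
  simp only [inner_smul_left, Finsupp.sum, Finset.mul_sum]

theorem hankelForm_add_right (u v₁ v₂ : ℕ →₀ H) :
    hankelForm S u (v₁ + v₂) = hankelForm S u v₁ + hankelForm S u v₂ := by
  simp only [hankelForm_eq_sum, ← Finsupp.sum_add]
  refine Finsupp.sum_congr fun j _ => Finsupp.sum_add_index' (fun _ => by simp) fun _ _ _ => ?_
  simp only [map_add, inner_add_right]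

theorem hankelForm_smul_right (c : ℂ) (u v : ℕ →₀ H) :
    hankelForm S u (c • v) = c * hankelForm S u v := by
  rw [hankelForm, hankelForm, Finset.mul_sum]
  refine Finset.sum_congr rfl fun j _ => ?_
  change (c • v).sum (fun k b => inner ℂ (u j) (S (j + k) b)) =
    c * v.sum fun k b => inner ℂ (u j) (S (j + k) b)
  rw [Finsupp.sum_smul_index' fun _ => by simp]
  simp only [map_smul, inner_smul_right, Finsupp.sum, Finset.mul_sum]

noncomputable def hankelSesqForm : (ℕ →₀ H) →ₗ⋆[ℂ] (ℕ →₀ H) →ₗ[ℂ] ℂ :=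
  LinearMap.mk₂'ₛₗ (starRingEnd ℂ) (RingHom.id ℂ) (hankelForm S) (hankelForm_add_left S)
    (hankelForm_smul_left S) (hankelForm_add_right S) (hankelForm_smul_right S)

theorem rightShift_sub {M : Type*} [AddCommGroup M] (u v : ℕ →₀ M) :
    rightShift (u - v) = rightShift u - rightShift v :=
  Finsupp.mapDomain_sub

theorem hankelForm_rightShift_left (u v : ℕ →₀ H) :
    hankelForm S (rightShift u) v = hankelForm S u (rightShift v) := by
  simp only [hankelForm_eq_sum, rightShift]
  rw [Finsupp.sum_mapDomain_index (fun _ => by simp) fun _ _ _ => by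
    simp only [inner_add_left, Finsupp.sum_add]]
  refine Finsupp.sum_congr fun j _ => ?_
  rw [Finsupp.sum_mapDomain_index (fun _ => by simp) fun _ _ _ => by
    simp only [map_add, inner_add_right]]
  simp only [add_right_comm, add_assoc]

theorem hankelForm_self_nonneg
    (hpos : ∀ (r : ℕ) (h : ℕ → H),
      0 ≤ ∑ k ∈ Finset.range (r + 1), ∑ l ∈ Finset.range (r + 1),
        (inner ℂ (h k) (S (k + l) (h l)) : ℂ))
    (u : ℕ →₀ H) : 0 ≤ hankelForm S u u := by
  obtain ⟨n, hn⟩ := u.support.exists_nat_subset_range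
  have hn' := hn.trans (Finset.range_subset_range.mpr n.le_succ)
  rw [hankelForm_eq_sum_range S hn' hn']
  exact hpos n u

end Hankel

theorem stmt4_general {H : Type*} [NormedAddCommGroup H] [InnerProductSpace ℂ H]
    (S : ℕ → H →L[ℂ] H)
    (hpos : ∀ (r : ℕ) (h : ℕ → H),
      0 ≤ ∑ k ∈ Finset.range (r + 1), ∑ l ∈ Finset.range (r + 1),
        (inner ℂ (h k) (S (k + l) (h l)) : ℂ))
    (u v : ℕ →₀ H)
    (hnull : hankelForm S (u - v) (u - v) = 0) :
    hankelForm S (rightShift u - rightShift v) (rightShift u - rightShift v) = 0 := by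
  rw [← rightShift_sub, hankelForm_rightShift_left]
  exact (hankelSesqForm S).apply_eq_zero_of_apply_self_eq_zero
    (hankelForm_self_nonneg S hpos) hnull _

/-- the shift operator `A₀` is well defined on the quotient of the space of
finitely supported sequences by the null space of the Hankel form: if `Φ(u - v, u - v) = 0`
then `Φ(Su - Sv, Su - Sv) = 0`, where `S` is the right shift. -/
theorem stmt4 {H : Type*} [NormedAddCommGroup H] [InnerProductSpace ℂ H] [CompleteSpace H]
    (S : ℕ → H →L[ℂ] H)
    (hpos : ∀ (r : ℕ) (h : ℕ → H),
      0 ≤ ∑ k ∈ Finset.range (r + 1), ∑ l ∈ Finset.range (r + 1),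
        (inner ℂ (h k) (S (k + l) (h l)) : ℂ))
    (u v : ℕ →₀ H)
    (hnull : hankelForm S (u - v) (u - v) = 0) :
    hankelForm S (rightShift u - rightShift v) (rightShift u - rightShift v) = 0 :=
  stmt4_general S hpos u v hnull
end

section
/- With the same construction, the map K : H → H defined by K h = x_{h,1} − i x_{h,0} is linear and bounded, with ‖K h‖² = ⟨S_2 h, h⟩ + ⟨S_0 h, h⟩ ≤ (‖S_0‖ + ‖S_2‖)‖h‖². -/
open scoped ComplexOrder

/-!
The cross terms of `‖x_{h,1} - i x_{h,0}‖²` are `-i ⟨x_{h,1}, x_{h,0}⟩ + i ⟨x_{h,0}, x_{h,1}⟩`,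
and both inner products equal `⟨h, S₁ h⟩` because the Hankel form only sees `j + k`; so they
cancel, leaving `⟨h, S₂ h⟩ + ⟨h, S₀ h⟩`, each of which is bounded by `‖Sⱼ‖ ‖h‖²`.
-/

open Complex Finsupp

lemma re_inner_apply_self_le {𝕜 E : Type*} [RCLike 𝕜] [NormedAddCommGroup E]
    [InnerProductSpace 𝕜 E] (T : E →L[𝕜] E) (x : E) :
    RCLike.re (inner 𝕜 x (T x)) ≤ ‖T‖ * ‖x‖ ^ 2 :=
  calc RCLike.re (inner 𝕜 x (T x)) ≤ ‖x‖ * ‖T x‖ := re_inner_le_norm _ _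
    _ ≤ ‖x‖ * (‖T‖ * ‖x‖) := by gcongr; exact T.le_opNorm x
    _ = ‖T‖ * ‖x‖ ^ 2 := by ring

lemma ofReal_norm_sub_I_smul_sq {E : Type*} [NormedAddCommGroup E] [InnerProductSpace ℂ E]
    (x y : E) :
    ((‖x - I • y‖ ^ 2 : ℝ) : ℂ)
      = inner ℂ x x + inner ℂ y y + I * (inner ℂ y x - inner ℂ x y) := by
  rw [show ((‖x - I • y‖ ^ 2 : ℝ) : ℂ) = inner ℂ (x - I • y) (x - I • y) by
    rw [inner_self_eq_norm_sq_to_K]; norm_cast]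
  simp only [inner_sub_sub_self, inner_smul_left, inner_smul_right, conj_I]
  linear_combination (-inner ℂ y y) * I_sq

section HankelForm

variable {H : Type*} [NormedAddCommGroup H] [InnerProductSpace ℂ H] (S : ℕ → H →L[ℂ] H)

lemma hankelForm_single_single (j k : ℕ) (h g : H) :
    hankelForm S (single j h) (single k g) = inner ℂ h (S (j + k) g) := by
  rcases eq_or_ne h 0 with rfl | hh
  · simp [hankelForm]
  rcases eq_or_ne g 0 with rfl | hg
  · simp [hankelForm]
  simp [hankelForm, hh, hg]

lemma ofReal_norm_single_one_sub_I_smul_single_zero_sq {K : Type*} [NormedAddCommGroup K]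
    [InnerProductSpace ℂ K] (e : (ℕ →₀ H) →ₗ[ℂ] K)
    (hinner : ∀ u v : ℕ →₀ H, (inner ℂ (e u) (e v) : ℂ) = hankelForm S u v) (h : H) :
    ((‖e (single 1 h) - I • e (single 0 h)‖ ^ 2 : ℝ) : ℂ)
      = inner ℂ h (S 2 h) + inner ℂ h (S 0 h) := by
  rw [ofReal_norm_sub_I_smul_sq]
  simp only [hinner, hankelForm_single_single]
  ring

end HankelForm

theorem stmt8_general {H K : Type*}
    [NormedAddCommGroup H] [InnerProductSpace ℂ H]
    [NormedAddCommGroup K] [InnerProductSpace ℂ K]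
    (S : ℕ → H →L[ℂ] H)
    (e : (ℕ →₀ H) →ₗ[ℂ] K)
    (hinner : ∀ u v : ℕ →₀ H, (inner ℂ (e u) (e v) : ℂ) = hankelForm S u v) :
    IsLinearMap ℂ
        (fun h : H => e (Finsupp.single 1 h) - Complex.I • e (Finsupp.single 0 h))
      ∧ (∀ h : H,
          ((‖e (Finsupp.single 1 h) - Complex.I • e (Finsupp.single 0 h)‖ ^ 2 : ℝ) : ℂ)
            = (inner ℂ h (S 2 h) : ℂ) + (inner ℂ h (S 0 h) : ℂ))
      ∧ (∀ h : H,
          ‖e (Finsupp.single 1 h) - Complex.I • e (Finsupp.single 0 h)‖ ^ 2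
            ≤ (‖S 0‖ + ‖S 2‖) * ‖h‖ ^ 2) := by
  have hnorm := ofReal_norm_single_one_sub_I_smul_single_zero_sq S e hinner
  refine ⟨(e ∘ₗ lsingle 1 - I • e ∘ₗ lsingle 0).isLinear, hnorm, fun h => ?_⟩
  calc ‖e (single 1 h) - I • e (single 0 h)‖ ^ 2
      = re (inner ℂ h (S 2 h)) + re (inner ℂ h (S 0 h)) := by
        rw [← add_re, ← hnorm, ofReal_re]
    _ ≤ ‖S 2‖ * ‖h‖ ^ 2 + ‖S 0‖ * ‖h‖ ^ 2 :=
        add_le_add (re_inner_apply_self_le (𝕜 := ℂ) _ _) (re_inner_apply_self_le (𝕜 := ℂ) _ _)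
    _ = (‖S 0‖ + ‖S 2‖) * ‖h‖ ^ 2 := by ring

/-- the map `K h = x_{h,1} - i x_{h,0}` is linear and bounded, with
`‖K h‖² = ⟨S₂ h, h⟩ + ⟨S₀ h, h⟩ ≤ (‖S₀‖ + ‖S₂‖) ‖h‖²`. -/
theorem stmt8 {H K : Type*}
    [NormedAddCommGroup H] [InnerProductSpace ℂ H] [CompleteSpace H]
    [NormedAddCommGroup K] [InnerProductSpace ℂ K] [CompleteSpace K]
    (S : ℕ → H →L[ℂ] H)
    (hpos : ∀ (r : ℕ) (h : ℕ → H),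
      0 ≤ ∑ k ∈ Finset.range (r + 1), ∑ l ∈ Finset.range (r + 1),
        (inner ℂ (h k) (S (k + l) (h l)) : ℂ))
    (e : (ℕ →₀ H) →ₗ[ℂ] K) (hdense : DenseRange e)
    (hinner : ∀ u v : ℕ →₀ H, (inner ℂ (e u) (e v) : ℂ) = hankelForm S u v) :
    IsLinearMap ℂ
        (fun h : H => e (Finsupp.single 1 h) - Complex.I • e (Finsupp.single 0 h))
      ∧ (∀ h : H,
          ((‖e (Finsupp.single 1 h) - Complex.I • e (Finsupp.single 0 h)‖ ^ 2 : ℝ) : ℂ)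
            = (inner ℂ h (S 2 h) : ℂ) + (inner ℂ h (S 0 h) : ℂ))
      ∧ (∀ h : H,
          ‖e (Finsupp.single 1 h) - Complex.I • e (Finsupp.single 0 h)‖ ^ 2
            ≤ (‖S 0‖ + ‖S 2‖) * ‖h‖ ^ 2) :=
  stmt8_general S e hinner
end
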